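/- arXiv:1811.05654 — 2 statements merged into one kernel-verified Lean document; each statement's English description precedes it below -/
import Mathlib

section
/- For any δ ∈ (0, 1/2), the Bernoulli KL divergence satisfies d(δ, 1-δ) ≥ log(1/(2.4·δ)). -/
set_option maxHeartbeats 1000000

noncomputable def bernKL (p q : ℝ) : ℝ :=
  p * Real.log (p / q) + (1 - p) * Real.log ((1 - p) / (1 - q))

private lemma aux_mul_log_ge (u : ℝ) (hu : 0 < u) : -(0.368 : ℝ) ≤ u * Real.log u := by
  have hx : ∀ x : ℝ, -Real.exp (-1) ≤ x * Real.exp x := by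
    intro x
    have h1 : (-x - 1) + 1 ≤ Real.exp (-x - 1) := Real.add_one_le_exp _
    have h2 : (0:ℝ) < Real.exp x := Real.exp_pos x
    have h3 : Real.exp (-x - 1) * Real.exp x = Real.exp (-1) := by
      rw [← Real.exp_add]; ring_nf
    nlinarith [mul_le_mul_of_nonneg_right (by linarith [h1] : -x ≤ Real.exp (-x - 1)) h2.le]
  have hexp : Real.exp (-1) ≤ 0.368 := by
    have hprod : Real.exp (-1) * Real.exp 1 = 1 := by
      rw [← Real.exp_add]; norm_num
    nlinarith [Real.exp_one_gt_d9, Real.exp_pos (-1)]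
  have := hx (Real.log u)
  rw [Real.exp_log hu] at this
  nlinarith [this]

private lemma log_six_fifths_ge : (0.18213 : ℝ) ≤ Real.log (6 / 5) := by
  have h := Real.abs_log_sub_add_sum_range_le (x := (1/6 : ℝ)) (by rw [abs_of_pos] <;> norm_num) 4
  rw [abs_of_pos (by norm_num : (0:ℝ) < 1/6)] at h
  have hs : (∑ i ∈ Finset.range 4, (1/6 : ℝ) ^ (i + 1) / (i + 1)) = 1/6 + 1/72 + 1/648 + 1/5184 := by
    norm_num [Finset.sum_range_succ]
  have hlog : Real.log (1 - 1/6 : ℝ) = -Real.log (6/5) := by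
    rw [show (1 - 1/6 : ℝ) = (6/5)⁻¹ by norm_num, Real.log_inv]
  rw [hs, hlog] at h
  have := abs_le.mp h
  have h2 := this.2
  norm_num at h2 ⊢
  linarith

private lemma log_three_halves_ge : (0.4 : ℝ) ≤ Real.log (3 / 2) := by
  have h := Real.abs_log_sub_add_sum_range_le (x := (1/3 : ℝ)) (by rw [abs_of_pos] <;> norm_num) 5
  rw [abs_of_pos (by norm_num : (0:ℝ) < 1/3)] at h
  have hs : (∑ i ∈ Finset.range 5, (1/3 : ℝ) ^ (i + 1) / (i + 1)) =
      1/3 + 1/18 + 1/81 + 1/324 + 1/1215 := by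
    norm_num [Finset.sum_range_succ]
  have hlog : Real.log (1 - 1/3 : ℝ) = -Real.log (3/2) := by
    rw [show (1 - 1/3 : ℝ) = (3/2)⁻¹ by norm_num, Real.log_inv]
  rw [hs, hlog] at h
  have := abs_le.mp h
  have h2 := this.2
  norm_num at h2 ⊢
  linarith

private lemma phi_ge (t : ℝ) (ht0 : 0 < t) (ht1 : t < 1) :
    t * Real.log (1 + t) + (1 - t) * Real.log (1 - t) ≥ -Real.log (6 / 5) := by
  have h65 := log_six_fifths_ge
  rcases le_or_gt t (1/2) with hhalf | hhalf
  · -- series region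
    have h1t : (0:ℝ) < 1 - t := by linarith
    have hA : Real.log (1 + t) ≥
        (t - t^2/2 + t^3/3 - t^4/4 + t^5/5 - t^6/6 + t^7/7) - t^8/(1-t) := by
      have h := Real.abs_log_sub_add_sum_range_le (x := -t)
        (by rw [abs_neg, abs_of_pos ht0]; linarith) 7
      rw [abs_neg, abs_of_pos ht0] at h
      have hs : (∑ i ∈ Finset.range 7, (-t) ^ (i + 1) / (i + 1)) =
          -(t - t^2/2 + t^3/3 - t^4/4 + t^5/5 - t^6/6 + t^7/7) := by
        norm_num [Finset.sum_range_succ]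
        try ring
      rw [hs, show (1 - -t : ℝ) = 1 + t by ring] at h
      have h2 := (abs_le.mp h).1
      linarith
    have hB : Real.log (1 - t) ≥
        -(t + t^2/2 + t^3/3 + t^4/4 + t^5/5 + t^6/6 + t^7/7) - t^8/(1-t) := by
      have h := Real.abs_log_sub_add_sum_range_le (x := t) (by rw [abs_of_pos ht0]; linarith) 7
      rw [abs_of_pos ht0] at h
      have hs : (∑ i ∈ Finset.range 7, t ^ (i + 1) / (i + 1)) =
          t + t^2/2 + t^3/3 + t^4/4 + t^5/5 + t^6/6 + t^7/7 := by
        norm_num [Finset.sum_range_succ]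
        try ring
      rw [hs] at h
      have h2 := (abs_le.mp h).1
      linarith
    have hmulA : t * Real.log (1 + t) ≥
        t * ((t - t^2/2 + t^3/3 - t^4/4 + t^5/5 - t^6/6 + t^7/7) - t^8/(1-t)) :=
      mul_le_mul_of_nonneg_left hA ht0.le
    have hmulB : (1 - t) * Real.log (1 - t) ≥
        (1 - t) * (-(t + t^2/2 + t^3/3 + t^4/4 + t^5/5 + t^6/6 + t^7/7) - t^8/(1-t)) :=
      mul_le_mul_of_nonneg_left hB h1t.le
    have hremsum : t * (t^8/(1-t)) + (1 - t) * (t^8/(1-t)) = t^8/(1-t) := by ring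
    have hpoly : t * (t - t^2/2 + t^3/3 - t^4/4 + t^5/5 - t^6/6 + t^7/7)
        - (1 - t) * (t + t^2/2 + t^3/3 + t^4/4 + t^5/5 + t^6/6 + t^7/7)
        - t^8/(1-t) ≥ -(0.18213 : ℝ) := by
      have hq : t^8/(1-t) ≤ t * (t - t^2/2 + t^3/3 - t^4/4 + t^5/5 - t^6/6 + t^7/7)
          - (1 - t) * (t + t^2/2 + t^3/3 + t^4/4 + t^5/5 + t^6/6 + t^7/7) + (0.18213 : ℝ) := by
        rw [div_le_iff₀ h1t]
        have hh : (0:ℝ) ≤ 1/2 - t := by linarith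
        have hp : (0:ℝ) ≤ 1/2 + t := by linarith
        have e7 : (0:ℝ) ≤ t^7 * (1/2 - t) := mul_nonneg (pow_nonneg ht0.le 7) hh
        have e9 : (0:ℝ) ≤ t^7 * ((1/2 - t) * (1/2 + t)) :=
          mul_nonneg (pow_nonneg ht0.le 7) (mul_nonneg hh hp)
        have e6 : (0:ℝ) ≤ t^6 * (1/2 - t) := mul_nonneg (pow_nonneg ht0.le 6) hh
        have e4 : (0:ℝ) ≤ t^4 * (1/2 - t) := mul_nonneg (pow_nonneg ht0.le 4) hh
        have e6' : (0:ℝ) ≤ t^6 := pow_nonneg ht0.le 6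
        nlinarith [e7, e9, e6, e4, e6', sq_nonneg (t - 0.36), sq_nonneg (t*t - 0.36*t),
          sq_nonneg (t*t - 0.1296), mul_nonneg ht0.le hh, sq_nonneg t]
      linarith
    have hrw : t * ((t - t^2/2 + t^3/3 - t^4/4 + t^5/5 - t^6/6 + t^7/7) - t^8/(1-t))
        + (1 - t) * (-(t + t^2/2 + t^3/3 + t^4/4 + t^5/5 + t^6/6 + t^7/7) - t^8/(1-t))
        = t * (t - t^2/2 + t^3/3 - t^4/4 + t^5/5 - t^6/6 + t^7/7)
          - (1 - t) * (t + t^2/2 + t^3/3 + t^4/4 + t^5/5 + t^6/6 + t^7/7) - t^8/(1-t) := by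
      ring
    linarith [hmulA, hmulB, hpoly, hrw, h65]
  · -- crude region
    have h1t : (0:ℝ) < 1 - t := by linarith
    have hlog : Real.log (3/2) ≤ Real.log (1 + t) :=
      Real.log_le_log (by norm_num) (by linarith)
    have hA : (0.4 : ℝ) * t ≤ t * Real.log (1 + t) := by
      have : (0.4 : ℝ) ≤ Real.log (1 + t) := le_trans log_three_halves_ge hlog
      nlinarith
    have hB := aux_mul_log_ge (1 - t) h1t
    nlinarith

theorem bernKL_delta_one_sub_delta_ge (δ : ℝ) (hδ : δ ∈ Set.Ioo (0 : ℝ) (1 / 2)) :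
    bernKL δ (1 - δ) ≥ Real.log (1 / (2.4 * δ)) := by
  obtain ⟨h0, h2⟩ := hδ
  have h1 : δ < 1 := by linarith
  have h1δ : (0:ℝ) < 1 - δ := by linarith
  set a := Real.log δ with ha
  set b := Real.log (1 - δ) with hb
  have key := phi_ge (1 - 2*δ) (by linarith) (by linarith)
  have e1 : Real.log (1 + (1 - 2*δ)) = Real.log 2 + b := by
    rw [show (1 + (1 - 2*δ) : ℝ) = 2 * (1 - δ) by ring, Real.log_mul (by norm_num) (by linarith)]
  have e2 : Real.log (1 - (1 - 2*δ)) = Real.log 2 + a := by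
    rw [show (1 - (1 - 2*δ) : ℝ) = 2 * δ by ring, Real.log_mul (by norm_num) (ne_of_gt h0)]
  rw [e1, e2] at key
  unfold bernKL
  have f1 : Real.log (δ / (1 - δ)) = a - b := Real.log_div (ne_of_gt h0) (ne_of_gt h1δ)
  have f2 : (1 - (1 - δ) : ℝ) = δ := by ring
  have f3 : Real.log ((1 - δ) / δ) = b - a := Real.log_div (ne_of_gt h1δ) (ne_of_gt h0)
  rw [f2, f1, f3]
  have f4 : Real.log (1 / (2.4 * δ)) = -(Real.log 2 + Real.log (6/5) + a) := by
    rw [one_div, Real.log_inv, show (2.4 : ℝ) * δ = 2 * (6/5) * δ by ring,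
      Real.log_mul (by norm_num) (ne_of_gt h0), Real.log_mul (by norm_num) (by norm_num)]
  rw [f4]
  linarith [key]
end

section
/- For the threshold crossing problem with μ ∈ A_2 (all μ_j < u), the value max_{w ∈ P_K} inf_{ν ∈ cl(A_1)} Σ_j w_j K_j(μ_j | ν_j) equals max_{w ∈ P_K} min_j w_j K_j(μ_j | u), where cl(A_1) = {ν : max_j ν_j ≥ u}. -/
theorem threshold_crossing_reduction (K : ℕ) (hK : 0 < K)
    (Kl : Fin K → ℝ → ℝ) (μ : Fin K → ℝ) (u : ℝ)
    (hcont : ∀ j, Continuous (Kl j))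
    (hnonneg : ∀ j x, 0 ≤ Kl j x)
    (hzero : ∀ j, Kl j (μ j) = 0)
    (hmono : ∀ j, MonotoneOn (Kl j) (Set.Ici (μ j)))
    (hμu : ∀ j, μ j < u) :
    sSup {x : ℝ | ∃ w ∈ stdSimplex ℝ (Fin K),
        x = sInf {y : ℝ | ∃ ν : Fin K → ℝ,
          (Finset.univ.sup' (⟨⟨0, hK⟩, Finset.mem_univ _⟩) (fun j => ν j)) ≥ u ∧
          y = ∑ j, w j * Kl j (ν j)}}
      = sSup {x : ℝ | ∃ w ∈ stdSimplex ℝ (Fin K),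
          x = Finset.univ.inf' (⟨⟨0, hK⟩, Finset.mem_univ _⟩)
                (fun j => w j * Kl j u)} := by
  have ne : (Finset.univ : Finset (Fin K)).Nonempty := ⟨⟨0, hK⟩, Finset.mem_univ _⟩
  have key : ∀ w ∈ stdSimplex ℝ (Fin K),
      sInf {y : ℝ | ∃ ν : Fin K → ℝ,
          (Finset.univ.sup' (⟨⟨0, hK⟩, Finset.mem_univ _⟩) (fun j => ν j)) ≥ u ∧
          y = ∑ j, w j * Kl j (ν j)}
      = Finset.univ.inf' (⟨⟨0, hK⟩, Finset.mem_univ _⟩) (fun j => w j * Kl j u) := by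
    intro w hw
    have hlb : ∀ y ∈ {y : ℝ | ∃ ν : Fin K → ℝ,
        (Finset.univ.sup' (⟨⟨0, hK⟩, Finset.mem_univ _⟩) (fun j => ν j)) ≥ u ∧
        y = ∑ j, w j * Kl j (ν j)},
        Finset.univ.inf' ne (fun j => w j * Kl j u) ≤ y := by
      rintro y ⟨ν, hν, rfl⟩
      obtain ⟨j1, -, hj1⟩ := Finset.exists_mem_eq_sup' ne (fun j => ν j)
      have hν1 : u ≤ ν j1 := by rw [hj1] at hν; exact hν
      calc Finset.univ.inf' ne (fun j => w j * Kl j u) ≤ w j1 * Kl j1 u :=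
            Finset.inf'_le _ (Finset.mem_univ _)
        _ ≤ w j1 * Kl j1 (ν j1) := mul_le_mul_of_nonneg_left
            (hmono j1 (le_of_lt (hμu j1)) ((hμu j1).le.trans hν1) hν1) (hw.1 j1)
        _ ≤ ∑ j, w j * Kl j (ν j) := Finset.single_le_sum
            (fun j _ => mul_nonneg (hw.1 j) (hnonneg j _)) (Finset.mem_univ _)
    obtain ⟨j0, -, hj0⟩ := Finset.exists_mem_eq_inf' ne (fun j => w j * Kl j u)
    have hmem : Finset.univ.inf' ne (fun j => w j * Kl j u) ∈
        {y : ℝ | ∃ ν : Fin K → ℝ,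
        (Finset.univ.sup' (⟨⟨0, hK⟩, Finset.mem_univ _⟩) (fun j => ν j)) ≥ u ∧
        y = ∑ j, w j * Kl j (ν j)} := by
      refine ⟨Function.update μ j0 u, ?_, ?_⟩
      · have : u ≤ Function.update μ j0 u j0 := by simp
        exact le_trans this (Finset.le_sup' _ (Finset.mem_univ j0))
      · rw [hj0, Finset.sum_eq_single j0]
        · simp
        · intro j _ hj
          rw [Function.update_of_ne hj, hzero j, mul_zero]
        · intro h; exact absurd (Finset.mem_univ j0) h
    exact le_antisymm (csInf_le ⟨_, hlb⟩ hmem) (le_csInf ⟨_, hmem⟩ hlb)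
  congr 1
  ext x
  simp only [Set.mem_setOf_eq]
  constructor
  · rintro ⟨w, hw, rfl⟩; exact ⟨w, hw, key w hw⟩
  · rintro ⟨w, hw, rfl⟩; exact ⟨w, hw, (key w hw).symm⟩
end
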